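/- Let κ₁, κ₂, κ₃ be quaternionic spinors such that λ_{mn} := {κ_m, κ_n} is nonzero for all m ≠ n. Then the product λ₁₂ λ₃₂⁻¹ λ₃₁ is a paravector. (Geometrically, by the paper's Theorem 2 this says that for any three spin-decorated horospheres in H⁴ with pairwise distinct centres, the triple product of lambda lengths λ₁₂ λ₃₂⁻¹ λ₃₁ lies in $ℝ³.) -/

import Mathlib

open Quaternion

noncomputable section

/-- The involution `q* = a + bi + cj - dk` on quaternions (Clifford reversion). -/
def qstar (q : ℍ[ℝ]) : ℍ[ℝ] := ⟨q.re, q.imI, q.imJ, -q.imK⟩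

/-- The involution `q' = a - bi - cj + dk` on quaternions. -/
def qprime (q : ℍ[ℝ]) : ℍ[ℝ] := ⟨q.re, -q.imI, -q.imJ, q.imK⟩

/-- A paravector is an element of `ℝ + ℝi + ℝj`, i.e. a quaternion with zero `k`-component. -/
def IsParavector (q : ℍ[ℝ]) : Prop := q.imK = 0

/-- The quaternion `k`. -/
def qk : ℍ[ℝ] := ⟨0, 0, 0, 1⟩

/-- A quaternionic spinor: a pair `(ξ, η) ≠ (0,0)` with `ξ * conj η` a paravector. -/
def IsSpinor (κ : ℍ[ℝ] × ℍ[ℝ]) : Prop := κ ≠ 0 ∧ IsParavector (κ.1 * star κ.2)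

/-- The bracket `{κ₁, κ₂} = ξ₁* η₂ − η₁* ξ₂`. -/
def bracket (κ₁ κ₂ : ℍ[ℝ] × ℍ[ℝ]) : ℍ[ℝ] := qstar κ₁.1 * κ₂.2 - qstar κ₁.2 * κ₂.1

/-- Right multiplication `κ x = (ξ x, η x)`. -/
def rmul (κ : ℍ[ℝ] × ℍ[ℝ]) (x : ℍ[ℝ]) : ℍ[ℝ] × ℍ[ℝ] := (κ.1 * x, κ.2 * x)

/-- The complementary pair `κ̌ = (η', −ξ')`. -/
def qcheck (κ : ℍ[ℝ] × ℍ[ℝ]) : ℍ[ℝ] × ℍ[ℝ] := (qprime κ.2, -qprime κ.1)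

/-- The real inner product on `ℍ²`: `⟨κ₁, κ₂⟩ = Re (ξ₁ ξ̄₂ + η₁ η̄₂)`. -/
def qinner (κ₁ κ₂ : ℍ[ℝ] × ℍ[ℝ]) : ℝ := (κ₁.1 * star κ₂.1 + κ₁.2 * star κ₂.2).re

/-- The squared norm `|κ|² = |ξ|² + |η|²` on `ℍ²`. -/
def qnsq (κ : ℍ[ℝ] × ℍ[ℝ]) : ℝ := Quaternion.normSq κ.1 + Quaternion.normSq κ.2

/-!
`q ↦ q*` is the reversion anti-automorphism of `ℍ`, and paravectors are exactly its fixed points;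
hence `p q p` and `q* p q` are paravectors whenever `p` and `q` (resp. `p`) are.

If `η ≠ 0`, a spinor `(ξ, η)` is `(x η, η)` with `x = ξ η⁻¹ = ξ η̄ / |η|²` a paravector, and then
`{κ_m, κ_n} = η_m* (x_m - x_n) η_n`. For three such spinors, with `a = x₁ - x₂`, `b = x₃ - x₂`,
`λ₁₂ λ̄₃₂ λ₃₁ = |η₂|² |η₃|² η₁* (a b̄ (b - a)) η₁` and `a b̄ (b - a) = |b|² a - a b̄ a` is a
paravector. The general case reduces to this one by a real shear `(ξ, η) ↦ (ξ, η + t ξ)`, which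
preserves brackets and spinors and, for all but finitely many `t`, makes every `η` nonzero.
-/

@[simp] lemma qstar_re (q : ℍ[ℝ]) : (qstar q).re = q.re := rfl
@[simp] lemma qstar_imI (q : ℍ[ℝ]) : (qstar q).imI = q.imI := rfl
@[simp] lemma qstar_imJ (q : ℍ[ℝ]) : (qstar q).imJ = q.imJ := rfl
@[simp] lemma qstar_imK (q : ℍ[ℝ]) : (qstar q).imK = -q.imK := rfl

lemma qstar_add (p q : ℍ[ℝ]) : qstar (p + q) = qstar p + qstar q := by
  ext <;> simp [add_comm]

lemma qstar_smul (r : ℝ) (q : ℍ[ℝ]) : qstar (r • q) = r • qstar q := by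
  ext <;> simp

lemma qstar_mul (p q : ℍ[ℝ]) : qstar (p * q) = qstar q * qstar p := by
  ext <;> simp <;> ring

lemma qstar_qstar (q : ℍ[ℝ]) : qstar (qstar q) = q := by
  ext <;> simp

lemma isParavector_iff_qstar_eq {q : ℍ[ℝ]} : IsParavector q ↔ qstar q = q := by
  rw [IsParavector, Quaternion.ext_iff]
  simp [neg_eq_self]

namespace IsParavector

variable {p q : ℍ[ℝ]}

lemma star (hq : IsParavector q) : IsParavector (star q) := by
  simpa [IsParavector] using hq

lemma sub (hp : IsParavector p) (hq : IsParavector q) : IsParavector (p - q) := by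
  simp_all [IsParavector]

lemma smul (r : ℝ) (hq : IsParavector q) : IsParavector (r • q) := by
  simp_all [IsParavector]

lemma mul_mul_self (hp : IsParavector p) (hq : IsParavector q) : IsParavector (p * q * p) := by
  rw [isParavector_iff_qstar_eq] at *
  rw [qstar_mul, qstar_mul, hp, hq, mul_assoc]

lemma qstar_mul_mul (hp : IsParavector p) (q : ℍ[ℝ]) : IsParavector (qstar q * p * q) := by
  rw [isParavector_iff_qstar_eq] at *
  rw [qstar_mul, qstar_mul, hp, qstar_qstar, mul_assoc]

lemma mul_star_mul_sub (hp : IsParavector p) (hq : IsParavector q) :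
    IsParavector (p * Star.star q * (q - p)) := by
  have : p * Star.star q * (q - p) = normSq q • p - p * Star.star q * p := by
    rw [mul_sub, mul_assoc p, star_mul_self, mul_coe_eq_smul]
  rw [this]
  exact (hp.smul _).sub (hp.mul_mul_self hq.star)

end IsParavector

/-- The action of the real matrix `[[1, 0], [t, 1]]` on `ℍ²`. -/
def shear (t : ℝ) (κ : ℍ[ℝ] × ℍ[ℝ]) : ℍ[ℝ] × ℍ[ℝ] := (κ.1, κ.2 + t • κ.1)

lemma bracket_shear (t : ℝ) (κ₁ κ₂ : ℍ[ℝ] × ℍ[ℝ]) :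
    bracket (shear t κ₁) (shear t κ₂) = bracket κ₁ κ₂ := by
  simp only [bracket, shear, qstar_add, qstar_smul, mul_add, add_mul, smul_mul_assoc,
    mul_smul_comm]
  abel

lemma isParavector_mul_star_shear {κ : ℍ[ℝ] × ℍ[ℝ]} (h : IsParavector (κ.1 * star κ.2)) (t : ℝ) :
    IsParavector ((shear t κ).1 * star (shear t κ).2) := by
  simp only [shear, star_add, Quaternion.star_smul, mul_add, mul_smul_comm, self_mul_star]
  simpa only [IsParavector, imK_add, imK_smul, imK_coe, smul_zero, add_zero] using h

lemma exists_shear_snd_ne_zero {ι : Type*} [Finite ι] (κ : ι → ℍ[ℝ] × ℍ[ℝ])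
    (hκ : ∀ i, κ i ≠ 0) : ∃ t : ℝ, ∀ i, (shear t (κ i)).2 ≠ 0 := by
  have hsub : ∀ i, {t : ℝ | (shear t (κ i)).2 = 0}.Subsingleton := by
    intro i s hs t ht
    by_contra hst
    have hξ : (κ i).1 = 0 := by
      have : (s - t) • (κ i).1 = 0 := by
        simp only [shear, Set.mem_ofPred_eq] at hs ht
        linear_combination (norm := module) hs - ht
      exact (smul_eq_zero.mp this).resolve_left (sub_ne_zero.mpr hst)
    have hη : (κ i).2 = 0 := by simpa [shear, hξ] using hs
    exact hκ i (Prod.ext hξ hη)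
  obtain ⟨t, ht⟩ := (Set.finite_iUnion fun i => (hsub i).finite).infinite_compl.nonempty
  exact ⟨t, by simpa using ht⟩

lemma exists_isParavector_eq_mul {ξ η : ℍ[ℝ]} (h : IsParavector (ξ * star η)) (hη : η ≠ 0) :
    ∃ x, IsParavector x ∧ ξ = x * η := by
  refine ⟨ξ * η⁻¹, ?_, (inv_mul_cancel_right₀ hη ξ).symm⟩
  rw [Quaternion.inv_def, mul_smul_comm]
  exact h.smul _

lemma bracket_eq_qstar_mul_sub_mul {κ₁ κ₂ : ℍ[ℝ] × ℍ[ℝ]} {x₁ x₂ : ℍ[ℝ]}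
    (hx₁ : IsParavector x₁) (h₁ : κ₁.1 = x₁ * κ₁.2) (h₂ : κ₂.1 = x₂ * κ₂.2) :
    bracket κ₁ κ₂ = qstar κ₁.2 * (x₁ - x₂) * κ₂.2 := by
  rw [bracket, h₁, h₂, qstar_mul, isParavector_iff_qstar_eq.mp hx₁]
  noncomm_ring

lemma isParavector_bracket_mul_star_mul_bracket {κ₁ κ₂ κ₃ : ℍ[ℝ] × ℍ[ℝ]}
    (h₁ : IsParavector (κ₁.1 * star κ₁.2)) (h₂ : IsParavector (κ₂.1 * star κ₂.2))
    (h₃ : IsParavector (κ₃.1 * star κ₃.2)) (hη₁ : κ₁.2 ≠ 0) (hη₂ : κ₂.2 ≠ 0) (hη₃ : κ₃.2 ≠ 0) :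
    IsParavector (bracket κ₁ κ₂ * star (bracket κ₃ κ₂) * bracket κ₃ κ₁) := by
  obtain ⟨x₁, hx₁, hκ₁⟩ := exists_isParavector_eq_mul h₁ hη₁
  obtain ⟨x₂, hx₂, hκ₂⟩ := exists_isParavector_eq_mul h₂ hη₂
  obtain ⟨x₃, hx₃, hκ₃⟩ := exists_isParavector_eq_mul h₃ hη₃
  rw [bracket_eq_qstar_mul_sub_mul hx₁ hκ₁ hκ₂, bracket_eq_qstar_mul_sub_mul hx₃ hκ₃ hκ₂,
    bracket_eq_qstar_mul_sub_mul hx₃ hκ₃ hκ₁]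
  set a := x₁ - x₂
  set b := x₃ - x₂
  have hc : x₃ - x₁ = b - a := by simp only [a, b]; abel
  have hprod : qstar κ₁.2 * a * κ₂.2 * star (qstar κ₃.2 * b * κ₂.2) *
        (qstar κ₃.2 * (x₃ - x₁) * κ₁.2)
      = (normSq κ₂.2 * normSq (qstar κ₃.2)) • (qstar κ₁.2 * (a * star b * (b - a)) * κ₁.2) := by
    calc _ = qstar κ₁.2 * a * (κ₂.2 * star κ₂.2) * star b * (star (qstar κ₃.2) * qstar κ₃.2)
            * (b - a) * κ₁.2 := by simp only [star_mul, hc, mul_assoc]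
      _ = _ := by
        rw [self_mul_star, star_mul_self]
        simp only [mul_coe_eq_smul, smul_mul_assoc, mul_smul_comm, smul_smul, mul_assoc]
  rw [hprod]
  exact ((hx₁.sub hx₂).mul_star_mul_sub (hx₃.sub hx₂)).qstar_mul_mul _ |>.smul _

theorem triangle_holonomy_general (κ₁ κ₂ κ₃ : ℍ[ℝ] × ℍ[ℝ])
    (h₁ : IsSpinor κ₁) (h₂ : IsSpinor κ₂) (h₃ : IsSpinor κ₃) :
    IsParavector (bracket κ₁ κ₂ * (bracket κ₃ κ₂)⁻¹ * bracket κ₃ κ₁) := by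
  obtain ⟨t, ht⟩ := exists_shear_snd_ne_zero ![κ₁, κ₂, κ₃]
    (by simp [Fin.forall_fin_succ, h₁.1, h₂.1, h₃.1])
  have key := isParavector_bracket_mul_star_mul_bracket (isParavector_mul_star_shear h₁.2 t)
    (isParavector_mul_star_shear h₂.2 t) (isParavector_mul_star_shear h₃.2 t) (ht 0) (ht 1) (ht 2)
  simp only [bracket_shear] at key
  rw [Quaternion.inv_def, mul_smul_comm, smul_mul_assoc]
  exact key.smul _

/-- Triangle holonomy: for quaternionic spinors `κ₁, κ₂, κ₃` with all pairwise brackets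
(lambda lengths) `λ_{mn} = {κ_m, κ_n}` nonzero, the product `λ₁₂ λ₃₂⁻¹ λ₃₁` is a
paravector. -/
theorem triangle_holonomy (κ₁ κ₂ κ₃ : ℍ[ℝ] × ℍ[ℝ])
    (h₁ : IsSpinor κ₁) (h₂ : IsSpinor κ₂) (h₃ : IsSpinor κ₃)
    (hne : ∀ m n : Fin 3, m ≠ n → bracket (![κ₁, κ₂, κ₃] m) (![κ₁, κ₂, κ₃] n) ≠ 0) :
    IsParavector (bracket κ₁ κ₂ * (bracket κ₃ κ₂)⁻¹ * bracket κ₃ κ₁) :=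
  triangle_holonomy_general κ₁ κ₂ κ₃ h₁ h₂ h₃
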